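/- arXiv:1002.3728 — 2 statements merged into one kernel-verified Lean document; each statement's English description precedes it below -/
import Mathlib

section
/- Let v be a radial weight on the unit disc 𝔻 (strictly positive, continuous, depending only on |z|) which is non-increasing in |z|. If f is holomorphic on 𝔻 and v·|f| vanishes at infinity on 𝔻 (i.e., for every ε > 0 there is R < 1 with v(z)|f(z)| ≤ ε for |z| ≥ R), and (ρ_n) ⊆ [0,1) satisfies ρ_n → 1, then the dilates f_n(z) := f(ρ_n z) satisfy sup_{z∈𝔻} v(z)|f(z) − f(ρ_n z)| → 0 as n → ∞. -/
open Metric Filter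

theorem stmt_6 (v : ℂ → ℝ) (f : ℂ → ℂ) (ρ : ℕ → ℝ)
    (hv_pos : ∀ z ∈ ball (0 : ℂ) 1, 0 < v z)
    (hv_cont : ContinuousOn v (ball (0 : ℂ) 1))
    (hv_radial : ∀ z ∈ ball (0 : ℂ) 1, ∀ w ∈ ball (0 : ℂ) 1, ‖z‖ = ‖w‖ → v z = v w)
    (hv_mono : ∀ z ∈ ball (0 : ℂ) 1, ∀ w ∈ ball (0 : ℂ) 1, ‖z‖ ≤ ‖w‖ → v w ≤ v z)
    (hf : DifferentiableOn ℂ f (ball (0 : ℂ) 1))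
    (hvanish : ∀ ε > 0, ∃ R < (1 : ℝ), ∀ z ∈ ball (0 : ℂ) 1, R ≤ ‖z‖ → v z * ‖f z‖ ≤ ε)
    (hρ : ∀ n, ρ n ∈ Set.Ico (0 : ℝ) 1)
    (hρlim : Tendsto ρ atTop (nhds 1)) :
    ∀ ε > 0, ∃ N : ℕ, ∀ n ≥ N, ∀ z ∈ ball (0 : ℂ) 1,
      v z * ‖f z - f ((ρ n : ℂ) * z)‖ ≤ ε := by
  intro ε hε
  obtain ⟨R, hR1, hR⟩ := hvanish (ε / 2) (by linarith)
  -- normalize R to be nonnegative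
  set R' : ℝ := max R 0 with hR'def
  have hR'0 : 0 ≤ R' := le_max_right _ _
  have hR'1 : R' < 1 := max_lt hR1 one_pos
  have hRvan : ∀ z ∈ ball (0 : ℂ) 1, R' ≤ ‖z‖ → v z * ‖f z‖ ≤ ε / 2 := by
    intro z hz hzR
    exact hR z hz (le_trans (le_max_left _ _) hzR)
  set s : ℝ := Real.sqrt R' with hsdef
  have hs0 : 0 ≤ s := Real.sqrt_nonneg _
  have hs1 : s < 1 := by
    rw [hsdef, show (1:ℝ) = Real.sqrt 1 by simp]
    exact Real.sqrt_lt_sqrt hR'0 hR'1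
  have hss : s * s = R' := Real.mul_self_sqrt hR'0
  set t : ℝ := (s + 1) / 2 with htdef
  have hst : s < t := by rw [htdef]; linarith
  have ht1 : t < 1 := by rw [htdef]; linarith
  have ht0 : 0 ≤ t := by rw [htdef]; linarith
  -- v is bounded by v 0
  have h01 : (0 : ℂ) ∈ ball (0 : ℂ) 1 := by simp
  have hv0 : 0 < v 0 := hv_pos 0 h01
  -- uniform continuity of f on closedBall 0 t
  have hsub : closedBall (0 : ℂ) t ⊆ ball (0 : ℂ) 1 := by
    intro x hx
    simp only [mem_closedBall, mem_ball] at hx ⊢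
    linarith
  have hfc : ContinuousOn f (closedBall (0 : ℂ) t) :=
    hf.continuousOn.mono hsub
  have hK : IsCompact (closedBall (0 : ℂ) t) := isCompact_closedBall _ _
  have huc : UniformContinuousOn f (closedBall (0 : ℂ) t) :=
    hK.uniformContinuousOn_of_continuous hfc
  rw [Metric.uniformContinuousOn_iff] at huc
  obtain ⟨δ, hδ0, hδ⟩ := huc (ε / v 0) (div_pos hε hv0)
  -- choose N
  set c : ℝ := max s (1 - δ) with hcdef
  have hc1 : c < 1 := max_lt hs1 (by linarith)
  have hev : ∀ᶠ n in atTop, c < ρ n := hρlim.eventually (eventually_gt_nhds hc1)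
  obtain ⟨N, hN⟩ := eventually_atTop.mp hev
  refine ⟨N, ?_⟩
  intro n hn z hz
  have hcn : c < ρ n := hN n hn
  have hρ0 : 0 ≤ ρ n := (hρ n).1
  have hρ1 : ρ n < 1 := (hρ n).2
  have hz1 : ‖z‖ < 1 := by simpa [mem_ball, dist_eq_norm] using hz
  have hz0 : 0 ≤ ‖z‖ := norm_nonneg z
  have hnormρz : ‖(ρ n : ℂ) * z‖ = ρ n * ‖z‖ := by
    rw [norm_mul, Complex.norm_real, Real.norm_of_nonneg hρ0]
  have hρz1 : ‖(ρ n : ℂ) * z‖ < 1 := by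
    rw [hnormρz]
    calc ρ n * ‖z‖ ≤ 1 * ‖z‖ := by nlinarith
    _ < 1 := by linarith
  have hρzball : (ρ n : ℂ) * z ∈ ball (0 : ℂ) 1 := by
    simpa [mem_ball, dist_eq_norm] using hρz1
  have hρzle : ‖(ρ n : ℂ) * z‖ ≤ ‖z‖ := by
    rw [hnormρz]; nlinarith
  rcases le_total ‖z‖ s with hcase | hcase
  · -- inner case: uniform continuity
    have hzt : z ∈ closedBall (0 : ℂ) t := by
      simp only [mem_closedBall, dist_eq_norm, sub_zero]
      linarith
    have hρzt : (ρ n : ℂ) * z ∈ closedBall (0 : ℂ) t := by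
      simp only [mem_closedBall, dist_eq_norm, sub_zero]
      calc ‖(ρ n : ℂ) * z‖ ≤ ‖z‖ := hρzle
      _ ≤ t := by linarith
    have hdist : dist z ((ρ n : ℂ) * z) < δ := by
      rw [dist_eq_norm]
      have : z - (ρ n : ℂ) * z = (1 - (ρ n : ℂ)) * z := by ring
      rw [this, norm_mul]
      have h1ρ : ‖(1 : ℂ) - (ρ n : ℂ)‖ = 1 - ρ n := by
        rw [show (1 : ℂ) - (ρ n : ℂ) = ((1 - ρ n : ℝ) : ℂ) by push_cast; ring,
          Complex.norm_real, Real.norm_of_nonneg (by linarith)]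
      rw [h1ρ]
      have hρδ : 1 - δ < ρ n := lt_of_le_of_lt (le_max_right s (1 - δ)) hcn
      calc (1 - ρ n) * ‖z‖ ≤ (1 - ρ n) * 1 := by nlinarith
      _ < δ := by linarith
    have hfd : dist (f z) (f ((ρ n : ℂ) * z)) < ε / v 0 := hδ z hzt _ hρzt hdist
    have hvz : v z ≤ v 0 := hv_mono 0 h01 z hz (by simp)
    calc v z * ‖f z - f ((ρ n : ℂ) * z)‖
        ≤ v 0 * ‖f z - f ((ρ n : ℂ) * z)‖ := by
          apply mul_le_mul_of_nonneg_right hvz (norm_nonneg _)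
      _ ≤ v 0 * (ε / v 0) := by
          apply mul_le_mul_of_nonneg_left _ (le_of_lt hv0)
          rw [← dist_eq_norm]
          exact le_of_lt hfd
      _ = ε := by field_simp
  · -- outer case
    have hsn : s < ρ n := lt_of_le_of_lt (le_max_left s (1 - δ)) hcn
    have hRz : R' ≤ ‖z‖ := by nlinarith
    have hRρz : R' ≤ ‖(ρ n : ℂ) * z‖ := by rw [hnormρz]; nlinarith
    have h1 : v z * ‖f z‖ ≤ ε / 2 := hRvan z hz hRz
    have hvmono : v z ≤ v ((ρ n : ℂ) * z) := hv_mono _ hρzball z hz hρzle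
    have h2 : v z * ‖f ((ρ n : ℂ) * z)‖ ≤ ε / 2 := by
      calc v z * ‖f ((ρ n : ℂ) * z)‖ ≤ v ((ρ n : ℂ) * z) * ‖f ((ρ n : ℂ) * z)‖ :=
            mul_le_mul_of_nonneg_right hvmono (norm_nonneg _)
        _ ≤ ε / 2 := hRvan _ hρzball hRρz
    calc v z * ‖f z - f ((ρ n : ℂ) * z)‖
        ≤ v z * (‖f z‖ + ‖f ((ρ n : ℂ) * z)‖) := by
          apply mul_le_mul_of_nonneg_left (norm_sub_le _ _) (le_of_lt (hv_pos z hz))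
      _ = v z * ‖f z‖ + v z * ‖f ((ρ n : ℂ) * z)‖ := by ring
      _ ≤ ε / 2 + ε / 2 := add_le_add h1 h2
      _ = ε := by ring
end

section
/- Let f be holomorphic on 𝔻, r_n = 1 − 2^{-2^n}, and suppose |f(w)| ≤ v̄(|w|)^{-1} for all w, where v̄ : [0,1) → (0,∞) is non-increasing. Fix t and n with n > t + 2 and |z| ∈ [r_t, r_{t+1}]. Then |f(r_{n+1}z) − f(r_n z)| ≤ 4·2^{-2^{n-1}}·v̄(r_n)^{-1}. -/
open Metric

set_option maxHeartbeats 1000000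

theorem stmt_12 (r : ℕ → ℝ) (hr : ∀ n, r n = 1 - (1/2 : ℝ) ^ (2 ^ n))
    (f : ℂ → ℂ) (vbar : ℝ → ℝ)
    (hf : DifferentiableOn ℂ f (ball (0 : ℂ) 1))
    (hpos : ∀ x ∈ Set.Ico (0 : ℝ) 1, 0 < vbar x)
    (hmono : AntitoneOn vbar (Set.Ico (0 : ℝ) 1))
    (hbound : ∀ w ∈ ball (0 : ℂ) 1, ‖f w‖ ≤ (vbar ‖w‖)⁻¹)
    (t n : ℕ) (hn : t + 2 < n) (z : ℂ) (hz : ‖z‖ ∈ Set.Icc (r t) (r (t + 1))) :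
    ‖f ((r (n + 1) : ℂ) * z) - f ((r n : ℂ) * z)‖ ≤
      4 * (1/2 : ℝ) ^ (2 ^ (n - 1)) * (vbar (r n))⁻¹ := by
  -- basic facts about powers of 1/2
  have hhalf : ∀ a b : ℕ, a ≤ b → ((1/2 : ℝ)) ^ b ≤ (1/2) ^ a := fun a b h =>
    pow_le_pow_of_le_one (by norm_num) (by norm_num) h
  have hppos : ∀ k : ℕ, (0 : ℝ) < (1/2) ^ k := fun k => pow_pos (by norm_num) k
  have hr_pos : ∀ k, 0 < r k := by
    intro k
    rw [hr k]
    have : (1/2 : ℝ) ^ (2 ^ k) ≤ (1/2) ^ 1 := hhalf 1 _ (Nat.one_le_two_pow)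
    norm_num at this ⊢; linarith
  have hr_lt_one : ∀ k, r k < 1 := by
    intro k; rw [hr k]; have := hppos (2 ^ k); linarith
  have hr_mono : ∀ a b : ℕ, a ≤ b → r a ≤ r b := by
    intro a b h; rw [hr a, hr b]
    have := hhalf (2 ^ a) (2 ^ b) (Nat.pow_le_pow_right (by norm_num) h)
    linarith
  -- key number `x`
  obtain ⟨d, rfl⟩ : ∃ d, n = t + 3 + d := ⟨n - (t + 3), by omega⟩
  set n := t + 3 + d with hn_def
  set x : ℝ := (1/2) ^ (2 ^ (t + 1 + d)) with hx_def
  have hx_pos : 0 < x := hppos _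
  have hx_half : x ≤ 1/2 := by
    calc x = (1/2 : ℝ) ^ (2 ^ (t + 1 + d)) := hx_def
      _ ≤ (1/2 : ℝ) ^ 1 := hhalf 1 _ Nat.one_le_two_pow
      _ = 1/2 := pow_one _
  have hx4 : (1/2 : ℝ) ^ (2 ^ n) = x ^ 4 := by
    rw [hx_def, ← pow_mul]
    congr 1
    rw [hn_def]
    ring
  have hx2 : (1/2 : ℝ) ^ (2 ^ (n - 1)) = x ^ 2 := by
    rw [hx_def, ← pow_mul]
    congr 1
    have : n - 1 = t + 2 + d := by omega
    rw [this]; ring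
  have hxy : x ≤ (1/2 : ℝ) ^ (2 ^ (t + 1)) :=
    hhalf _ _ (Nat.pow_le_pow_right (by norm_num) (by omega))
  -- the gap δ = r n - r (t+1)
  have hδ_eq : r n - r (t + 1) = (1/2 : ℝ) ^ (2 ^ (t + 1)) - (1/2) ^ (2 ^ n) := by
    rw [hr n, hr (t + 1)]; ring
  have h3 : x ^ 3 ≤ 1/8 := by nlinarith
  have h4x : x ^ 4 ≤ x / 8 := by nlinarith [mul_le_mul_of_nonneg_left h3 hx_pos.le]
  have hδ_pos : 0 < r n - r (t + 1) := by
    rw [hδ_eq, hx4]; nlinarith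
  -- norm of z
  have hz_le : ‖z‖ ≤ r (t + 1) := hz.2
  have hz_nonneg : (0 : ℝ) ≤ ‖z‖ := norm_nonneg z
  -- membership facts
  have hmem : ∀ k : ℕ, ((r k : ℂ) * z) ∈ closedBall (0 : ℂ) (r (t + 1)) := by
    intro k
    rw [mem_closedBall, dist_zero_right, norm_mul, Complex.norm_real,
      Real.norm_of_nonneg (hr_pos k).le]
    calc r k * ‖z‖ ≤ 1 * ‖z‖ := by
          apply mul_le_mul_of_nonneg_right (hr_lt_one k).le hz_nonneg
      _ ≤ r (t + 1) := by rw [one_mul]; exact hz_le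
  have hsub : closedBall (0 : ℂ) (r (t + 1)) ⊆ ball (0 : ℂ) 1 := by
    apply closedBall_subset_ball
    exact lt_of_le_of_lt (hr_mono (t + 1) n (by omega)) (hr_lt_one n)
  -- vbar at r n
  have hrn_mem : r n ∈ Set.Ico (0 : ℝ) 1 := ⟨(hr_pos n).le, hr_lt_one n⟩
  have hv_pos : 0 < vbar (r n) := hpos _ hrn_mem
  -- derivative bound on closedBall 0 (r (t+1))
  have hderiv : ∀ w ∈ closedBall (0 : ℂ) (r (t + 1)),
      ‖deriv f w‖ ≤ (vbar (r n))⁻¹ / (r n - r (t + 1)) := by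
    intro w hw
    rw [mem_closedBall, dist_zero_right] at hw
    apply Complex.norm_deriv_le_of_forall_mem_sphere_norm_le hδ_pos
    · apply hf.diffContOnCl_ball
      intro ζ hζ
      rw [mem_closedBall] at hζ
      rw [mem_ball, dist_zero_right]
      calc ‖ζ‖ ≤ ‖ζ - w‖ + ‖w‖ := by simpa using norm_add_le (ζ - w) w
        _ ≤ (r n - r (t + 1)) + r (t + 1) := by
            rw [← dist_eq_norm]; exact add_le_add hζ hw
        _ = r n := by ring
        _ < 1 := hr_lt_one n
    · intro ζ hζ
      rw [mem_sphere, dist_eq_norm] at hζ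
      have hζ_le : ‖ζ‖ ≤ r n := by
        calc ‖ζ‖ ≤ ‖ζ - w‖ + ‖w‖ := by simpa using norm_add_le (ζ - w) w
          _ ≤ (r n - r (t + 1)) + r (t + 1) := add_le_add hζ.le hw
          _ = r n := by ring
      have hζ_mem : ζ ∈ ball (0 : ℂ) 1 := by
        rw [mem_ball, dist_zero_right]; exact lt_of_le_of_lt hζ_le (hr_lt_one n)
      refine (hbound ζ hζ_mem).trans ?_
      apply inv_anti₀ hv_pos
      exact hmono ⟨norm_nonneg ζ, lt_of_le_of_lt hζ_le (hr_lt_one n)⟩ hrn_mem hζ_le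
  -- mean value inequality
  have hdiff : ∀ w ∈ closedBall (0 : ℂ) (r (t + 1)), DifferentiableAt ℂ f w := fun w hw =>
    hf.differentiableAt (isOpen_ball.mem_nhds (hsub hw))
  have hmvt := (convex_closedBall (0 : ℂ) (r (t + 1))).norm_image_sub_le_of_norm_deriv_le
    hdiff hderiv (hmem n) (hmem (n + 1))
  refine hmvt.trans ?_
  -- estimate the distance
  have hdist : ‖(r (n + 1) : ℂ) * z - (r n : ℂ) * z‖ ≤ (1/2 : ℝ) ^ (2 ^ n) := by
    have : (r (n + 1) : ℂ) * z - (r n : ℂ) * z = ((r (n + 1) - r n : ℝ) : ℂ) * z := by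
      push_cast; ring
    rw [this, norm_mul, Complex.norm_real]
    have hle : r (n + 1) - r n ≤ (1/2 : ℝ) ^ (2 ^ n) := by
      rw [hr (n + 1), hr n]
      have := hppos (2 ^ (n + 1))
      linarith
    have hnn : 0 ≤ r (n + 1) - r n := by linarith [hr_mono n (n + 1) (by omega)]
    calc ‖(r (n + 1) - r n : ℝ)‖ * ‖z‖ ≤ ((1/2 : ℝ) ^ (2 ^ n)) * 1 := by
          apply mul_le_mul _ _ hz_nonneg (hppos _).le
          · rw [Real.norm_of_nonneg hnn]; exact hle
          · exact le_of_lt (lt_of_le_of_lt hz_le (hr_lt_one (t + 1)))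
      _ = (1/2 : ℝ) ^ (2 ^ n) := mul_one _
  calc (vbar (r n))⁻¹ / (r n - r (t + 1)) * ‖(r (n + 1) : ℂ) * z - (r n : ℂ) * z‖
      ≤ (vbar (r n))⁻¹ / (r n - r (t + 1)) * ((1/2 : ℝ) ^ (2 ^ n)) := by
        apply mul_le_mul_of_nonneg_left hdist
        positivity
    _ ≤ 4 * (1/2 : ℝ) ^ (2 ^ (n - 1)) * (vbar (r n))⁻¹ := by
        rw [div_mul_eq_mul_div, div_le_iff₀ hδ_pos, hδ_eq, hx4, hx2]
        have hv : 0 ≤ (vbar (r n))⁻¹ := by positivity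
        have hstep : x ^ 4 ≤ 4 * x ^ 2 * (x - x ^ 4) := by
          nlinarith [mul_nonneg (pow_pos hx_pos 3).le
            (by linarith : (0:ℝ) ≤ 4 - 4 * x ^ 3 - x)]
        have key : x ^ 4 ≤ 4 * x ^ 2 * ((1/2 : ℝ) ^ (2 ^ (t + 1)) - x ^ 4) := by
          nlinarith [hstep, mul_le_mul_of_nonneg_left (sub_le_sub_right hxy (x ^ 4))
            (by positivity : (0:ℝ) ≤ 4 * x ^ 2)]
        calc (vbar (r n))⁻¹ * x ^ 4
            ≤ (vbar (r n))⁻¹ * (4 * x ^ 2 * ((1/2 : ℝ) ^ (2 ^ (t + 1)) - x ^ 4)) :=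
              mul_le_mul_of_nonneg_left key hv
          _ = 4 * x ^ 2 * (vbar (r n))⁻¹ * ((1/2 : ℝ) ^ (2 ^ (t + 1)) - x ^ 4) := by ring
end
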